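/- Let N be a nonnegative continuous local martingale under Q with martingale defect m(T) = N_0 − E^Q[N_T], and let C^α(T,K) := E^Q[(N_T − K)^+] + α·m(T) for α ∈ [0,1]. Then for every T ≥ 0 and α < 1: lim_{K→0} C^α(T,K) = αN_0 + (1−α)E^Q[N_T], and consequently N is a strict local martingale if and only if there exists t ≥ 0 such that lim_{K→0} C^α(T,K) < N_0 for all T > t. -/

import Mathlib

/-!
Localizing and passing to the limit with a conditional Fatou argument shows that a nonnegative
local martingale is a supermartingale, so `t ↦ E[N_t]` is nonincreasing and starts at `N_0`; a
supermartingale with constant expectation is a martingale, so `N` is strict exactly when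
`E[N_T] < N_0` from some time on. By dominated convergence `E[(N_T - K)⁺] → E[N_T]` as `K ↓ 0`,
and since `α < 1` the limit `α N_0 + (1 - α) E[N_T]` lies below `N_0` exactly when `E[N_T]` does.
-/

open MeasureTheory Set

noncomputable section

/-- Local 1/2-Hölder continuity on compacts away from zero. -/
def LocHolderHalf (g : ℝ → ℝ) : Prop :=
  ∀ L > (0:ℝ), ∃ C ≥ (0:ℝ), ∀ x ∈ Icc L⁻¹ L, ∀ y ∈ Icc L⁻¹ L,
    |g x - g y| ≤ C * |x - y| ^ ((1:ℝ)/2)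

/-- A continuous, positive, locally 1/2-Hölder volatility function on (0,∞). -/
def NiceVol (g : ℝ → ℝ) : Prop :=
  ContinuousOn g (Ioi 0) ∧ (∀ x ∈ Ioi (0:ℝ), 0 < g x) ∧ LocHolderHalf g

/-- Standing regularity assumptions (Assumption 2.1) on a time-dependent volatility. -/
def StandingAssumptions (σ' : ℝ → ℝ → ℝ) : Prop :=
  ContinuousOn (fun p : ℝ × ℝ => σ' p.1 p.2) (Ici 0 ×ˢ Ioi 0) ∧
  (∀ t ∈ Ici (0:ℝ), ∀ x ∈ Ioi (0:ℝ), 0 < σ' t x) ∧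
  (∀ L > (0:ℝ), ∃ C ≥ (0:ℝ), ∀ t ∈ Icc (0:ℝ) L, ∀ x ∈ Icc L⁻¹ L, ∀ y ∈ Icc L⁻¹ L,
    |σ' t x - σ' t y| ≤ C * |x - y| ^ ((1:ℝ)/2)) ∧
  ∃ A : ℝ, ∀ t ∈ Ici (0:ℝ), ∀ x ∈ Ioc (0:ℝ) 1, σ' t x ≤ A

variable {Ω : Type*}

/-- `X` is a local martingale on `[r,∞)` w.r.t. the filtration `ℱ`:
there is a localizing sequence of stopping times increasing to `∞`
such that each stopped process is a martingale on `[r,∞)`. -/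
def IsLocalMartingaleFrom {m0 : MeasurableSpace Ω} (r : ℝ)
    (ℱ : Filtration ℝ m0) (μ : Measure Ω) (X : ℝ → Ω → ℝ) : Prop :=
  ∃ τ : ℕ → Ω → ℝ,
    (∀ n, IsStoppingTime ℱ (fun ω => ((τ n ω : ℝ) : WithTop ℝ))) ∧
    (∀ ω, Monotone fun n => τ n ω) ∧
    (∀ ω, Filter.Tendsto (fun n => τ n ω) Filter.atTop Filter.atTop) ∧
    ∀ n, ∀ s t : ℝ, r ≤ s → s ≤ t →
      Integrable (fun ω => X (min t (τ n ω)) ω) μ ∧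
      μ[fun ω => X (min t (τ n ω)) ω | ℱ s] =ᵐ[μ] fun ω => X (min s (τ n ω)) ω

/-- `X` is a (true) martingale on `[r,∞)`. -/
def IsMartingaleFrom {m0 : MeasurableSpace Ω} (r : ℝ)
    (ℱ : Filtration ℝ m0) (μ : Measure Ω) (X : ℝ → Ω → ℝ) : Prop :=
  (∀ t, Integrable (X t) μ) ∧
  ∀ s t : ℝ, r ≤ s → s ≤ t → μ[X t | ℱ s] =ᵐ[μ] X s

/-- `X` is a supermartingale on `[r,∞)`. -/
def IsSupermartingaleFrom {m0 : MeasurableSpace Ω} (r : ℝ)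
    (ℱ : Filtration ℝ m0) (μ : Measure Ω) (X : ℝ → Ω → ℝ) : Prop :=
  (∀ t, StronglyMeasurable[ℱ t] (X t)) ∧ (∀ t, Integrable (X t) μ) ∧
  ∀ s t : ℝ, r ≤ s → s ≤ t → μ[X t | ℱ s] ≤ᵐ[μ] X s

/-- `X` solves the driftless SDE `dX_t = σ'(t,X_t) dW_t` on `[r,∞)` with `X_r = x`,
formulated as the associated (Stroock--Varadhan) martingale problem: `X` is adapted with
continuous paths and, for every `C²` function `f`, the process
`f(X_t) - ∫_r^t σ'(s,X_s)²/2 · f''(X_s) ds` is a local martingale on `[r,∞)`. -/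
def SolvesSDEFrom {m0 : MeasurableSpace Ω} (r : ℝ)
    (ℱ : Filtration ℝ m0) (μ : Measure Ω)
    (σ' : ℝ → ℝ → ℝ) (x : ℝ) (X : ℝ → Ω → ℝ) : Prop :=
  (∀ t, StronglyMeasurable[ℱ t] (X t)) ∧
  (∀ ω, Continuous fun t => X t ω) ∧
  (∀ ω, X r ω = x) ∧
  ∀ f : ℝ → ℝ, ContDiff ℝ 2 f →
    IsLocalMartingaleFrom r ℱ μ
      (fun t ω => f (X t ω) - ∫ s in r..t, σ' s (X s ω) ^ 2 / 2 * deriv (deriv f) (X s ω))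

end

open MeasureTheory Set Filter Topology

section ConditionalFatou

variable {Ω : Type*} {m m0 : MeasurableSpace Ω} {μ : Measure Ω}

theorem condExp_le_of_forall_setIntegral_le [IsFiniteMeasure μ] (hm : m ≤ m0)
    {f g : Ω → ℝ} (hf : Integrable f μ) (hg : Integrable g μ) (hgm : StronglyMeasurable[m] g)
    (hfg : ∀ s, MeasurableSet[m] s → ∫ ω in s, f ω ∂μ ≤ ∫ ω in s, g ω ∂μ) :
    μ[f | m] ≤ᵐ[μ] g := by
  have hcm : StronglyMeasurable[m] (μ[f | m]) := stronglyMeasurable_condExp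
  refine ae_le_of_ae_le_trim (hm := hm) <|
    ae_le_of_forall_setIntegral_le (integrable_condExp.trim hm hcm) (hg.trim hm hgm)
      fun s hs _ => ?_
  rw [← setIntegral_trim hm hcm hs, ← setIntegral_trim hm hgm hs,
    setIntegral_condExp hm hf hs]
  exact hfg s hs

noncomputable def tailInf (f : ℕ → Ω → ℝ) (n : ℕ) (ω : Ω) : ℝ :=
  ⨅ k, f (n + k) ω

variable {f : ℕ → Ω → ℝ}

theorem tailInf_le (hf : ∀ n ω, 0 ≤ f n ω) (n k : ℕ) (ω : Ω) : tailInf f n ω ≤ f (n + k) ω :=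
  ciInf_le ⟨0, by rintro _ ⟨j, rfl⟩; exact hf _ _⟩ k

theorem tailInf_nonneg (hf : ∀ n ω, 0 ≤ f n ω) (n : ℕ) (ω : Ω) : 0 ≤ tailInf f n ω :=
  le_ciInf fun _ => hf _ _

theorem monotone_tailInf (hf : ∀ n ω, 0 ≤ f n ω) (ω : Ω) : Monotone fun n => tailInf f n ω :=
  fun a b hab => le_ciInf fun k => by
    simpa only [show a + (b - a + k) = b + k by omega] using tailInf_le hf a (b - a + k) ω

theorem tendsto_tailInf_of_eventually_eq {F : Ω → ℝ} {ω : Ω}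
    (hfF : ∀ᶠ n in atTop, f n ω = F ω) :
    Tendsto (fun n => tailInf f n ω) atTop (𝓝 (F ω)) := by
  obtain ⟨K, hK⟩ := eventually_atTop.mp hfF
  refine tendsto_const_nhds.congr' ?_
  filter_upwards [eventually_ge_atTop K] with n hn
  simp only [tailInf, hK _ (hn.trans (Nat.le_add_right n _)), ciInf_const]

theorem integrable_tailInf (hf : ∀ n ω, 0 ≤ f n ω) (hf_int : ∀ n, Integrable (f n) μ)
    (n : ℕ) : Integrable (tailInf f n) μ := by
  have hmeas : AEMeasurable (tailInf f n) μ :=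
    AEMeasurable.iInf fun k => (hf_int (n + k)).aemeasurable
  refine (hf_int n).mono hmeas.aestronglyMeasurable (Eventually.of_forall fun ω => ?_)
  rw [Real.norm_of_nonneg (tailInf_nonneg hf n ω), Real.norm_of_nonneg (hf n ω)]
  simpa using tailInf_le hf n 0 ω

theorem condExp_le_of_eventually_eq [IsFiniteMeasure μ] (hm : m ≤ m0) {h : ℕ → Ω → ℝ}
    {F H : Ω → ℝ} (hf : ∀ n ω, 0 ≤ f n ω) (hf_int : ∀ n, Integrable (f n) μ)
    (hcond : ∀ n, μ[f n | m] =ᵐ[μ] h n)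
    (hfF : ∀ᵐ ω ∂μ, ∀ᶠ n in atTop, f n ω = F ω) (hhH : ∀ᵐ ω ∂μ, ∀ᶠ n in atTop, h n ω = H ω)
    (hF : Integrable F μ) (hH : Integrable H μ) (hHm : StronglyMeasurable[m] H) :
    μ[F | m] ≤ᵐ[μ] H := by
  -- Conditional Fatou: `μ[tailInf f n | m] ≤ h (n + k)` for every `k`, and `tailInf f n ↑ F`.
  have hcondInf : ∀ n, μ[tailInf f n | m] ≤ᵐ[μ] H := fun n => by
    have hle : ∀ᵐ ω ∂μ, ∀ k, (μ[tailInf f n | m]) ω ≤ h (n + k) ω := ae_all_iff.mpr fun k =>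
      (condExp_mono (integrable_tailInf hf hf_int n) (hf_int (n + k))
        (Eventually.of_forall fun ω => tailInf_le hf n k ω)).trans (hcond (n + k)).le
    filter_upwards [hle, hhH] with ω hω hωH
    have htail : ∀ᶠ k in atTop, h (n + k) ω = H ω :=
      ((tendsto_add_atTop_nat n).eventually hωH).mono fun k hk => by rwa [add_comm] at hk
    exact ge_of_tendsto' (tendsto_const_nhds.congr' (htail.mono fun _ hk => hk.symm)) hω
  refine condExp_le_of_forall_setIntegral_le hm hF hH hHm fun s hs => ?_
  have hlim : Tendsto (fun n => ∫ ω in s, tailInf f n ω ∂μ) atTop (𝓝 (∫ ω in s, F ω ∂μ)) :=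
    integral_tendsto_of_tendsto_of_monotone (fun n => (integrable_tailInf hf hf_int n).restrict)
      hF.restrict (ae_of_all _ (monotone_tailInf hf))
      (ae_restrict_of_ae (hfF.mono fun _ => tendsto_tailInf_of_eventually_eq))
  refine le_of_tendsto' hlim fun n => ?_
  rw [← setIntegral_condExp hm (integrable_tailInf hf hf_int n) hs]
  exact setIntegral_mono_ae integrable_condExp.integrableOn hH.integrableOn (hcondInf n)

end ConditionalFatou

section LocalMartingale

variable {Ω : Type*} {m0 : MeasurableSpace Ω} {ℱ : Filtration ℝ m0} {μ : Measure Ω}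
  [IsFiniteMeasure μ] {N : ℝ → Ω → ℝ} {r : ℝ}

theorem IsLocalMartingaleFrom.condExp_le (hloc : IsLocalMartingaleFrom r ℱ μ N)
    (hadp : ∀ t, StronglyMeasurable[ℱ t] (N t)) (hint : ∀ t, Integrable (N t) μ)
    (hnonneg : ∀ t ω, 0 ≤ N t ω) {s t : ℝ} (hrs : r ≤ s) (hst : s ≤ t) :
    μ[N t | ℱ s] ≤ᵐ[μ] N s := by
  obtain ⟨τ, -, -, hτ_top, hτ_mart⟩ := hloc
  have hstopped : ∀ u, ∀ ω, ∀ᶠ n in atTop, N (min u (τ n ω)) ω = N u ω := fun u ω =>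
    ((hτ_top ω).eventually_ge_atTop u).mono fun n hn => by rw [min_eq_left hn]
  exact condExp_le_of_eventually_eq (ℱ.le s) (fun n ω => hnonneg _ ω)
    (fun n => (hτ_mart n t t (hrs.trans hst) le_rfl).1) (fun n => (hτ_mart n s t hrs hst).2)
    (ae_of_all _ (hstopped t)) (ae_of_all _ (hstopped s)) (hint t) (hint s) (hadp s)

theorem IsLocalMartingaleFrom.integral_antitoneOn (hloc : IsLocalMartingaleFrom r ℱ μ N)
    (hadp : ∀ t, StronglyMeasurable[ℱ t] (N t)) (hint : ∀ t, Integrable (N t) μ)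
    (hnonneg : ∀ t ω, 0 ≤ N t ω) : AntitoneOn (fun t => ∫ ω, N t ω ∂μ) (Ici r) :=
  fun s hs t _ hst => by
    dsimp only
    rw [← integral_condExp (ℱ.le s) (f := N t)]
    exact integral_mono_ae integrable_condExp (hint s)
      (hloc.condExp_le hadp hint hnonneg hs hst)

theorem IsLocalMartingaleFrom.isMartingaleFrom_iff (hloc : IsLocalMartingaleFrom r ℱ μ N)
    (hadp : ∀ t, StronglyMeasurable[ℱ t] (N t)) (hint : ∀ t, Integrable (N t) μ)
    (hnonneg : ∀ t ω, 0 ≤ N t ω) :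
    IsMartingaleFrom r ℱ μ N ↔ ∀ t ≥ r, ∫ ω, N t ω ∂μ = ∫ ω, N r ω ∂μ := by
  constructor
  · rintro ⟨-, hmart⟩ t hrt
    rw [← integral_condExp (ℱ.le r) (f := N t), integral_congr_ae (hmart r t le_rfl hrt)]
  · intro hconst
    refine ⟨hint, fun s t hrs hst => ?_⟩
    refine (integral_eq_iff_of_ae_le integrable_condExp (hint s)
      (hloc.condExp_le hadp hint hnonneg hrs hst)).mp ?_
    rw [integral_condExp (ℱ.le s), hconst t (hrs.trans hst), hconst s hrs]

theorem IsLocalMartingaleFrom.not_isMartingaleFrom_iff (hloc : IsLocalMartingaleFrom r ℱ μ N)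
    (hadp : ∀ t, StronglyMeasurable[ℱ t] (N t)) (hint : ∀ t, Integrable (N t) μ)
    (hnonneg : ∀ t ω, 0 ≤ N t ω) :
    ¬ IsMartingaleFrom r ℱ μ N ↔ ∃ t ≥ r, ∀ T > t, ∫ ω, N T ω ∂μ < ∫ ω, N r ω ∂μ := by
  have hanti := hloc.integral_antitoneOn hadp hint hnonneg
  rw [hloc.isMartingaleFrom_iff hadp hint hnonneg]
  push Not
  constructor
  · rintro ⟨t, hrt, hne⟩
    have hlt := lt_of_le_of_ne (hanti self_mem_Ici hrt hrt) hne
    exact ⟨t, hrt, fun T hT => (hanti hrt (hrt.trans hT.le) hT.le).trans_lt hlt⟩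
  · rintro ⟨t, hrt, hlt⟩
    exact ⟨t + 1, by linarith, (hlt (t + 1) (by linarith)).ne⟩

end LocalMartingale

theorem tendsto_integral_max_sub_nhdsGT_zero {Ω : Type*} {m0 : MeasurableSpace Ω}
    {μ : Measure Ω} {f : Ω → ℝ} (hf : Integrable f μ) (hf_nonneg : 0 ≤ᵐ[μ] f) :
    Tendsto (fun K => ∫ ω, max (f ω - K) 0 ∂μ) (𝓝[>] 0) (𝓝 (∫ ω, f ω ∂μ)) := by
  refine tendsto_integral_filter_of_dominated_convergence f
    (Eventually.of_forall fun K =>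
      (hf.aestronglyMeasurable.sub aestronglyMeasurable_const).sup aestronglyMeasurable_const)
    ?_ hf ?_
  · filter_upwards [self_mem_nhdsWithin] with K (hK : 0 < K)
    filter_upwards [hf_nonneg] with ω hω
    rw [Real.norm_of_nonneg (le_max_right _ _)]
    exact max_le (by linarith) hω
  · filter_upwards [hf_nonneg] with ω (hω : 0 ≤ f ω)
    have hcont : Continuous fun K : ℝ => max (f ω - K) 0 := by fun_prop
    have hlim := (hcont.tendsto 0).mono_left (nhdsWithin_le_nhds (s := Ioi 0))
    rwa [sub_zero, max_eq_left hω] at hlim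

theorem stmt_6_general {Ω : Type*} {m0 : MeasurableSpace Ω}
    (ℱ : Filtration ℝ m0) (μ : Measure Ω) [IsProbabilityMeasure μ]
    (N : ℝ → Ω → ℝ) (n₀ : ℝ)
    (hloc : IsLocalMartingaleFrom 0 ℱ μ N)
    (hadp : ∀ t, StronglyMeasurable[ℱ t] (N t))
    (hint : ∀ t, Integrable (N t) μ)
    (hnonneg : ∀ t ω, 0 ≤ N t ω)
    (hN0 : ∀ ω, N 0 ω = n₀)
    (α : ℝ) (hα : α ∈ Ico (0:ℝ) 1)
    (m : ℝ → ℝ) (C : ℝ → ℝ → ℝ)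
    (hm : ∀ T, m T = n₀ - ∫ ω, N T ω ∂μ)
    (hC : ∀ T K, C T K = (∫ ω, max (N T ω - K) 0 ∂μ) + α * m T) :
    (∀ T ≥ (0:ℝ), Filter.Tendsto (fun K => C T K) (nhdsWithin 0 (Ioi 0))
      (nhds (α * n₀ + (1 - α) * ∫ ω, N T ω ∂μ))) ∧
    ((IsLocalMartingaleFrom 0 ℱ μ N ∧ ¬ IsMartingaleFrom 0 ℱ μ N) ↔
      ∃ t ≥ (0:ℝ), ∀ T > t, α * n₀ + (1 - α) * (∫ ω, N T ω ∂μ) < n₀) := by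
  have hE0 : ∫ ω, N 0 ω ∂μ = n₀ := by simp [hN0]
  refine ⟨fun T _ => ?_, ?_⟩
  · simp_rw [hC, hm]
    convert (tendsto_integral_max_sub_nhdsGT_zero (hint T)
      (ae_of_all _ (hnonneg T))).add_const (α * (n₀ - ∫ ω, N T ω ∂μ)) using 2
    ring
  · have hlimit_lt : ∀ T, α * n₀ + (1 - α) * (∫ ω, N T ω ∂μ) < n₀ ↔ ∫ ω, N T ω ∂μ < n₀ :=
      fun T => by constructor <;> intro h <;> nlinarith [hα.2]
    simp_rw [hlimit_lt, ← hE0, ← hloc.not_isMartingaleFrom_iff hadp hint hnonneg]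
    exact and_iff_right hloc

/-- For a nonnegative continuous local martingale `N` with `N₀ = n₀`,
defect `m(T) = n₀ − E[N_T]`, and collateralized call price
`C^α(T,K) = E[(N_T−K)⁺] + α·m(T)` with `α ∈ [0,1)`:
`lim_{K→0⁺} C^α(T,K) = α n₀ + (1−α) E[N_T]`, and `N` is a strict local martingale
iff there exists `t ≥ 0` such that this limit is `< n₀` for all `T > t`. -/
theorem stmt_6 {Ω : Type*} {m0 : MeasurableSpace Ω}
    (ℱ : Filtration ℝ m0) (μ : Measure Ω) [IsProbabilityMeasure μ]
    (N : ℝ → Ω → ℝ) (n₀ : ℝ)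
    (hloc : IsLocalMartingaleFrom 0 ℱ μ N)
    (hadp : ∀ t, StronglyMeasurable[ℱ t] (N t))
    (hint : ∀ t, Integrable (N t) μ)
    (hcontpaths : ∀ ω, Continuous fun t => N t ω)
    (hnonneg : ∀ t ω, 0 ≤ N t ω)
    (hN0 : ∀ ω, N 0 ω = n₀)
    (α : ℝ) (hα : α ∈ Ico (0:ℝ) 1)
    (m : ℝ → ℝ) (C : ℝ → ℝ → ℝ)
    (hm : ∀ T, m T = n₀ - ∫ ω, N T ω ∂μ)
    (hC : ∀ T K, C T K = (∫ ω, max (N T ω - K) 0 ∂μ) + α * m T) :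
    (∀ T ≥ (0:ℝ), Filter.Tendsto (fun K => C T K) (nhdsWithin 0 (Ioi 0))
      (nhds (α * n₀ + (1 - α) * ∫ ω, N T ω ∂μ))) ∧
    ((IsLocalMartingaleFrom 0 ℱ μ N ∧ ¬ IsMartingaleFrom 0 ℱ μ N) ↔
      ∃ t ≥ (0:ℝ), ∀ T > t, α * n₀ + (1 - α) * (∫ ω, N T ω ∂μ) < n₀) :=
  stmt_6_general ℱ μ N n₀ hloc hadp hint hnonneg hN0 α hα m C hm hC
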